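/- Let 0 < p < 1, 0 < q < 1 with p ≤ 2(1-q), let β ≥ 0, λ ≥ 0, 0 < p_s ≤ 1, p_f = 1-p_s, q̄ = 1-q, δ ≥ 1 an integer. Define ℓ₀(1) = β p p_f + λ, ℓ₀(0) = β p (for the synced state (0,0,0)), and ℓ_δ(a) as β(δ+1)q̄ p_f + λ if a=1 and β(δ+1)q̄ if a=0. Then ℓ_δ(1) + ℓ₀(0) ≤ ℓ_δ(0) + ℓ₀(1). -/
import Mathlib


theorem cost_submodular_synced (p q β lam ps : ℝ) (δ : ℕ)
    (hp : 0 < p) (hp1 : p < 1) (hq : 0 < q) (hq1 : q < 1)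
    (hpq : p ≤ 2 * (1 - q)) (hβ : 0 ≤ β) (hlam : 0 ≤ lam)
    (hps : 0 < ps) (hps1 : ps ≤ 1) (hδ : 1 ≤ δ) :
    let pf : ℝ := 1 - ps
    let qb : ℝ := 1 - q
    (β * ((δ : ℝ) + 1) * qb * pf + lam) + β * p
      ≤ β * ((δ : ℝ) + 1) * qb + (β * p * pf + lam) := by
  intro pf qb
  have key : p ≤ ((δ:ℝ)+1)*(1-q) := by
    have h1 : (1:ℝ) ≤ (δ:ℝ) := by exact_mod_cast hδ
    nlinarith
  have h := mul_nonneg (mul_nonneg hβ hps.le) (sub_nonneg.2 key)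
  show β * ((δ : ℝ) + 1) * (1-q) * (1-ps) + lam + β * p
      ≤ β * ((δ : ℝ) + 1) * (1-q) + (β * p * (1-ps) + lam)
  nlinarith [h]
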